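/- In the affine chart z = 1, let ω = P dx + Q dy with P = −ζ(n+1)λ₂ y xⁿ and Q = (λ₁ + λ₂ n) yⁿ − ζ λ₁ x^{n+1}, where λ₁ + (n+1)λ₂ = 0, λ₂ ≠ 0, ζ ≠ 0, n ≥ 2. Then the curve f(x,y) = y(yⁿ − ζ x^{n+1}) is invariant, i.e. there exists h ∈ ℂ[x,y] with P·(∂f/∂y) − Q·(∂f/∂x) = f·h, equivalently ω ∧ df = f·h dx∧dy. -/
import Mathlib


open MvPolynomial

theorem stmt_18 (n : ℕ) (hn : 2 ≤ n) (ζ lam2 : ℂ) (hζ : ζ ≠ 0) (hlam2 : lam2 ≠ 0)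
    (lam1 : ℂ) (hlam1 : lam1 = -(n + 1) * lam2) :
    letI x : MvPolynomial (Fin 2) ℂ := X 0
    letI y : MvPolynomial (Fin 2) ℂ := X 1
    letI f : MvPolynomial (Fin 2) ℂ := y * (y ^ n - C ζ * x ^ (n + 1))
    letI P : MvPolynomial (Fin 2) ℂ := C (-(ζ * (n + 1) * lam2)) * y * x ^ n
    letI Q : MvPolynomial (Fin 2) ℂ := C (lam1 + n * lam2) * y ^ n - C (ζ * lam1) * x ^ (n + 1)
    f ∣ (P * pderiv 1 f - Q * pderiv 0 f) := by
  subst hlam1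
  refine ⟨C (-(ζ * (n + 1) * (n + 2) * lam2)) * X 0 ^ n, ?_⟩
  obtain ⟨m, rfl⟩ : ∃ m, n = m + 2 := ⟨n - 2, by omega⟩
  simp only [map_mul, map_add, map_sub, map_neg, map_ofNat, map_one, map_natCast,
    pderiv_mul, pderiv_X_self, pderiv_X_of_ne (by decide : (1 : Fin 2) ≠ 0),
    pderiv_X_of_ne (by decide : (0 : Fin 2) ≠ 1), pderiv_pow, Derivation.leibniz_pow,
    pderiv_C, smul_eq_mul]
  simp only [show m + 2 - 1 = m + 1 from rfl]
  push_cast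
  ring
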